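/- arXiv:math/0512519 — 4 statements merged into one kernel-verified Lean document; each statement's English description precedes it below -/
import Mathlib

section
/- Let a = (0,7,11)(1,5,6)(2,9,10)(3,4,8) and b = (0,4,2)(1,5,9)(3,7,11)(6,10,8) be permutations of the 12-element set {0,1,...,11}. Then a and b are even permutations (i.e., lie in the alternating group A_12), and the subgroup T of the symmetric group generated by a and b has order 96. -/
set_option maxRecDepth 20000

/-- `a = (0,7,11)(1,5,6)(2,9,10)(3,4,8)` as a permutation of `{0,…,11}`. -/
def a : Equiv.Perm (Fin 12) := c[0, 7, 11] * c[1, 5, 6] * c[2, 9, 10] * c[3, 4, 8]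

/-- `b = (0,4,2)(1,5,9)(3,7,11)(6,10,8)` as a permutation of `{0,…,11}`. -/
def b : Equiv.Perm (Fin 12) := c[0, 4, 2] * c[1, 5, 9] * c[3, 7, 11] * c[6, 10, 8]

/-- Helper to build a permutation of `Fin 12` from explicit value vectors. -/
def mkP (f g : Fin 12 → Fin 12) (h : ∀ x, g (f x) = x := by decide)
    (h' : ∀ x, f (g x) = x := by decide) : Equiv.Perm (Fin 12) := ⟨f, g, h, h'⟩

def e0 : Equiv.Perm (Fin 12) := mkP ![0,1,2,3,4,5,6,7,8,9,10,11] ![0,1,2,3,4,5,6,7,8,9,10,11]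
def e1 : Equiv.Perm (Fin 12) := mkP ![7,5,9,4,8,6,1,11,3,10,2,0] ![11,6,10,8,3,1,5,0,4,2,9,7]
def e2 : Equiv.Perm (Fin 12) := mkP ![4,5,0,7,2,9,10,11,6,1,8,3] ![2,9,4,11,0,1,8,3,10,5,6,7]
def e3 : Equiv.Perm (Fin 12) := mkP ![11,6,10,8,3,1,5,0,4,2,9,7] ![7,5,9,4,8,6,1,11,3,10,2,0]
def e4 : Equiv.Perm (Fin 12) := mkP ![8,6,7,11,9,10,2,0,1,5,3,4] ![7,8,6,10,11,9,1,2,0,4,5,3]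
def e5 : Equiv.Perm (Fin 12) := mkP ![11,9,1,2,6,10,5,3,7,8,0,4] ![10,2,3,7,11,6,4,8,9,1,5,0]
def e6 : Equiv.Perm (Fin 12) := mkP ![2,9,4,11,0,1,8,3,10,5,6,7] ![4,5,0,7,2,9,10,11,6,1,8,3]
def e7 : Equiv.Perm (Fin 12) := mkP ![3,1,11,0,10,2,9,7,5,6,4,8] ![3,1,5,0,10,8,9,7,11,6,4,2]
def e8 : Equiv.Perm (Fin 12) := mkP ![0,10,5,9,1,2,6,4,11,3,7,8] ![0,4,5,9,7,2,6,10,11,3,1,8]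
def e9 : Equiv.Perm (Fin 12) := mkP ![9,10,8,0,7,5,3,4,2,6,1,11] ![3,10,8,6,7,5,9,4,2,0,1,11]
def e10 : Equiv.Perm (Fin 12) := mkP ![3,10,8,6,7,5,9,4,2,0,1,11] ![9,10,8,0,7,5,3,4,2,6,1,11]
def e11 : Equiv.Perm (Fin 12) := mkP ![6,10,11,3,1,8,0,4,5,9,7,2] ![6,4,11,3,7,8,0,10,5,9,1,2]
def e12 : Equiv.Perm (Fin 12) := mkP ![3,1,5,0,10,8,9,7,11,6,4,2] ![3,1,11,0,10,2,9,7,5,6,4,8]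
def e13 : Equiv.Perm (Fin 12) := mkP ![7,2,6,10,5,9,1,8,0,4,11,3] ![8,6,1,11,9,4,2,0,7,5,3,10]
def e14 : Equiv.Perm (Fin 12) := mkP ![10,2,3,7,11,6,4,8,9,1,5,0] ![11,9,1,2,6,10,5,3,7,8,0,4]
def e15 : Equiv.Perm (Fin 12) := mkP ![4,2,3,1,11,6,10,8,9,7,5,0] ![11,3,1,2,0,10,5,9,7,8,6,4]
def e16 : Equiv.Perm (Fin 12) := mkP ![1,2,0,4,5,3,7,8,6,10,11,9] ![2,0,1,5,3,4,8,6,7,11,9,10]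
def e17 : Equiv.Perm (Fin 12) := mkP ![4,5,6,7,2,3,10,11,0,1,8,9] ![8,9,4,5,0,1,2,3,10,11,6,7]
def e18 : Equiv.Perm (Fin 12) := mkP ![7,5,3,4,8,0,1,11,9,10,2,6] ![5,6,10,2,3,1,11,0,4,8,9,7]
def e19 : Equiv.Perm (Fin 12) := mkP ![4,8,9,1,5,0,10,2,3,7,11,6] ![5,3,7,8,0,4,11,9,1,2,6,10]
def e20 : Equiv.Perm (Fin 12) := mkP ![1,8,6,4,11,9,7,2,0,10,5,3] ![8,0,7,11,3,10,2,6,1,5,9,4]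
def e21 : Equiv.Perm (Fin 12) := mkP ![7,8,6,10,11,9,1,2,0,4,5,3] ![8,6,7,11,9,10,2,0,1,5,3,4]
def e22 : Equiv.Perm (Fin 12) := mkP ![10,8,3,7,5,6,4,2,9,1,11,0] ![11,9,7,2,6,4,5,3,1,8,0,10]
def e23 : Equiv.Perm (Fin 12) := mkP ![8,9,4,5,0,1,2,3,10,11,6,7] ![4,5,6,7,2,3,10,11,0,1,8,9]
def e24 : Equiv.Perm (Fin 12) := mkP ![5,9,7,8,6,4,11,3,1,2,0,10] ![10,8,9,7,5,0,4,2,3,1,11,6]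
def e25 : Equiv.Perm (Fin 12) := mkP ![8,6,1,11,9,4,2,0,7,5,3,10] ![7,2,6,10,5,9,1,8,0,4,11,3]
def e26 : Equiv.Perm (Fin 12) := mkP ![11,6,4,8,3,7,5,0,10,2,9,1] ![7,11,9,4,2,6,1,5,3,10,8,0]
def e27 : Equiv.Perm (Fin 12) := mkP ![8,3,10,5,6,7,2,9,4,11,0,1] ![10,11,6,1,8,3,4,5,0,7,2,9]
def e28 : Equiv.Perm (Fin 12) := mkP ![5,3,1,8,0,10,11,9,7,2,6,4] ![4,2,9,1,11,0,10,8,3,7,5,6]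
def e29 : Equiv.Perm (Fin 12) := mkP ![11,3,1,2,0,10,5,9,7,8,6,4] ![4,2,3,1,11,6,10,8,9,7,5,0]
def e30 : Equiv.Perm (Fin 12) := mkP ![2,3,4,11,6,1,8,9,10,5,0,7] ![10,5,0,1,2,9,4,11,6,7,8,3]
def e31 : Equiv.Perm (Fin 12) := mkP ![11,0,10,8,9,1,5,6,4,2,3,7] ![1,5,9,10,8,6,7,11,3,4,2,0]
def e32 : Equiv.Perm (Fin 12) := mkP ![8,0,7,11,3,10,2,6,1,5,9,4] ![1,8,6,4,11,9,7,2,0,10,5,3]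
def e33 : Equiv.Perm (Fin 12) := mkP ![2,0,7,5,3,10,8,6,1,11,9,4] ![1,8,0,4,11,3,7,2,6,10,5,9]
def e34 : Equiv.Perm (Fin 12) := mkP ![5,0,4,2,9,7,11,6,10,8,3,1] ![1,11,3,10,2,0,7,5,9,4,8,6]
def e35 : Equiv.Perm (Fin 12) := mkP ![2,9,10,11,0,7,8,3,4,5,6,1] ![4,11,0,7,8,9,10,5,6,1,2,3]
def e36 : Equiv.Perm (Fin 12) := mkP ![11,9,7,2,6,4,5,3,1,8,0,10] ![10,8,3,7,5,6,4,2,9,1,11,0]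
def e37 : Equiv.Perm (Fin 12) := mkP ![2,6,1,5,9,4,8,0,7,11,3,10] ![7,2,0,10,5,3,1,8,6,4,11,9]
def e38 : Equiv.Perm (Fin 12) := mkP ![5,6,10,2,3,1,11,0,4,8,9,7] ![7,5,3,4,8,0,1,11,9,10,2,6]
def e39 : Equiv.Perm (Fin 12) := mkP ![0,1,8,3,4,11,6,7,2,9,10,5] ![0,1,8,3,4,11,6,7,2,9,10,5]
def e40 : Equiv.Perm (Fin 12) := mkP ![3,4,2,6,1,11,9,10,8,0,7,5] ![9,4,2,0,1,11,3,10,8,6,7,5]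
def e41 : Equiv.Perm (Fin 12) := mkP ![6,4,5,3,7,2,0,10,11,9,1,8] ![6,10,5,3,1,2,0,4,11,9,7,8]
def e42 : Equiv.Perm (Fin 12) := mkP ![0,4,5,9,7,2,6,10,11,3,1,8] ![0,10,5,9,1,2,6,4,11,3,7,8]
def e43 : Equiv.Perm (Fin 12) := mkP ![9,4,8,0,1,5,3,10,2,6,7,11] ![3,4,8,6,1,5,9,10,2,0,7,11]
def e44 : Equiv.Perm (Fin 12) := mkP ![0,7,2,3,10,5,6,1,8,9,4,11] ![0,7,2,3,10,5,6,1,8,9,4,11]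
def e45 : Equiv.Perm (Fin 12) := mkP ![3,7,11,0,4,2,9,1,5,6,10,8] ![3,7,5,0,4,8,9,1,11,6,10,2]
def e46 : Equiv.Perm (Fin 12) := mkP ![9,7,11,6,4,2,3,1,5,0,10,8] ![9,7,5,6,4,8,3,1,11,0,10,2]
def e47 : Equiv.Perm (Fin 12) := mkP ![6,7,8,9,10,11,0,1,2,3,4,5] ![6,7,8,9,10,11,0,1,2,3,4,5]
def e48 : Equiv.Perm (Fin 12) := mkP ![9,10,2,0,7,11,3,4,8,6,1,5] ![3,10,2,6,7,11,9,4,8,0,1,5]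
def e49 : Equiv.Perm (Fin 12) := mkP ![0,10,11,9,1,8,6,4,5,3,7,2] ![0,4,11,9,7,8,6,10,5,3,1,2]
def e50 : Equiv.Perm (Fin 12) := mkP ![9,1,5,6,10,8,3,7,11,0,4,2] ![9,1,11,6,10,2,3,7,5,0,4,8]
def e51 : Equiv.Perm (Fin 12) := mkP ![6,1,2,9,4,5,0,7,8,3,10,11] ![6,1,2,9,4,5,0,7,8,3,10,11]
def e52 : Equiv.Perm (Fin 12) := mkP ![9,1,11,6,10,2,3,7,5,0,4,8] ![9,1,5,6,10,8,3,7,11,0,4,2]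
def e53 : Equiv.Perm (Fin 12) := mkP ![6,10,5,3,1,2,0,4,11,9,7,8] ![6,4,5,3,7,2,0,10,11,9,1,8]
def e54 : Equiv.Perm (Fin 12) := mkP ![3,10,2,6,7,11,9,4,8,0,1,5] ![9,10,2,0,7,11,3,4,8,6,1,5]
def e55 : Equiv.Perm (Fin 12) := mkP ![9,7,5,6,4,8,3,1,11,0,10,2] ![9,7,11,6,4,2,3,1,5,0,10,8]
def e56 : Equiv.Perm (Fin 12) := mkP ![3,7,5,0,4,8,9,1,11,6,10,2] ![3,7,11,0,4,2,9,1,5,6,10,8]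
def e57 : Equiv.Perm (Fin 12) := mkP ![3,4,8,6,1,5,9,10,2,0,7,11] ![9,4,8,0,1,5,3,10,2,6,7,11]
def e58 : Equiv.Perm (Fin 12) := mkP ![6,4,11,3,7,8,0,10,5,9,1,2] ![6,10,11,3,1,8,0,4,5,9,7,2]
def e59 : Equiv.Perm (Fin 12) := mkP ![0,4,11,9,7,8,6,10,5,3,1,2] ![0,10,11,9,1,8,6,4,5,3,7,2]
def e60 : Equiv.Perm (Fin 12) := mkP ![9,4,2,0,1,11,3,10,8,6,7,5] ![3,4,2,6,1,11,9,10,8,0,7,5]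
def e61 : Equiv.Perm (Fin 12) := mkP ![7,11,9,4,2,6,1,5,3,10,8,0] ![11,6,4,8,3,7,5,0,10,2,9,1]
def e62 : Equiv.Perm (Fin 12) := mkP ![4,11,0,7,8,9,10,5,6,1,2,3] ![2,9,10,11,0,7,8,3,4,5,6,1]
def e63 : Equiv.Perm (Fin 12) := mkP ![10,11,0,1,8,9,4,5,6,7,2,3] ![2,3,10,11,6,7,8,9,4,5,0,1]
def e64 : Equiv.Perm (Fin 12) := mkP ![1,11,3,10,2,0,7,5,9,4,8,6] ![5,0,4,2,9,7,11,6,10,8,3,1]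
def e65 : Equiv.Perm (Fin 12) := mkP ![10,2,9,7,11,0,4,8,3,1,5,6] ![5,9,1,8,6,10,11,3,7,2,0,4]
def e66 : Equiv.Perm (Fin 12) := mkP ![7,2,0,10,5,3,1,8,6,4,11,9] ![2,6,1,5,9,4,8,0,7,11,3,10]
def e67 : Equiv.Perm (Fin 12) := mkP ![10,5,6,1,2,3,4,11,0,7,8,9] ![8,3,4,5,6,1,2,9,10,11,0,7]
def e68 : Equiv.Perm (Fin 12) := mkP ![1,5,9,10,8,6,7,11,3,4,2,0] ![11,0,10,8,9,1,5,6,4,2,3,7]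
def e69 : Equiv.Perm (Fin 12) := mkP ![10,5,0,1,2,9,4,11,6,7,8,3] ![2,3,4,11,6,1,8,9,10,5,0,7]
def e70 : Equiv.Perm (Fin 12) := mkP ![1,2,6,4,5,9,7,8,0,10,11,3] ![8,0,1,11,3,4,2,6,7,5,9,10]
def e71 : Equiv.Perm (Fin 12) := mkP ![4,2,9,1,11,0,10,8,3,7,5,6] ![5,3,1,8,0,10,11,9,7,2,6,4]
def e72 : Equiv.Perm (Fin 12) := mkP ![10,11,6,1,8,3,4,5,0,7,2,9] ![8,3,10,5,6,7,2,9,4,11,0,1]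
def e73 : Equiv.Perm (Fin 12) := mkP ![4,11,6,7,8,3,10,5,0,1,2,9] ![8,9,10,5,0,7,2,3,4,11,6,1]
def e74 : Equiv.Perm (Fin 12) := mkP ![4,8,3,1,5,6,10,2,9,7,11,0] ![11,3,7,2,0,4,5,9,1,8,6,10]
def e75 : Equiv.Perm (Fin 12) := mkP ![1,8,0,4,11,3,7,2,6,10,5,9] ![2,0,7,5,3,10,8,6,1,11,9,4]
def e76 : Equiv.Perm (Fin 12) := mkP ![7,8,0,10,11,3,1,2,6,4,5,9] ![2,6,7,5,9,10,8,0,1,11,3,4]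
def e77 : Equiv.Perm (Fin 12) := mkP ![10,8,9,7,5,0,4,2,3,1,11,6] ![5,9,7,8,6,4,11,3,1,2,0,10]
def e78 : Equiv.Perm (Fin 12) := mkP ![7,11,3,4,2,0,1,5,9,10,8,6] ![5,6,4,2,3,7,11,0,10,8,9,1]
def e79 : Equiv.Perm (Fin 12) := mkP ![1,5,3,10,8,0,7,11,9,4,2,6] ![5,0,10,2,9,1,11,6,4,8,3,7]
def e80 : Equiv.Perm (Fin 12) := mkP ![1,11,9,10,2,6,7,5,3,4,8,0] ![11,0,4,8,9,7,5,6,10,2,3,1]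
def e81 : Equiv.Perm (Fin 12) := mkP ![2,6,7,5,9,10,8,0,1,11,3,4] ![7,8,0,10,11,3,1,2,6,4,5,9]
def e82 : Equiv.Perm (Fin 12) := mkP ![5,9,1,8,6,10,11,3,7,2,0,4] ![10,2,9,7,11,0,4,8,3,1,5,6]
def e83 : Equiv.Perm (Fin 12) := mkP ![8,9,10,5,0,7,2,3,4,11,6,1] ![4,11,6,7,8,3,10,5,0,1,2,9]
def e84 : Equiv.Perm (Fin 12) := mkP ![2,0,1,5,3,4,8,6,7,11,9,10] ![1,2,0,4,5,3,7,8,6,10,11,9]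
def e85 : Equiv.Perm (Fin 12) := mkP ![8,0,1,11,3,4,2,6,7,5,9,10] ![1,2,6,4,5,9,7,8,0,10,11,3]
def e86 : Equiv.Perm (Fin 12) := mkP ![8,3,4,5,6,1,2,9,10,11,0,7] ![10,5,6,1,2,3,4,11,0,7,8,9]
def e87 : Equiv.Perm (Fin 12) := mkP ![5,3,7,8,0,4,11,9,1,2,6,10] ![4,8,9,1,5,0,10,2,3,7,11,6]
def e88 : Equiv.Perm (Fin 12) := mkP ![11,3,7,2,0,4,5,9,1,8,6,10] ![4,8,3,1,5,6,10,2,9,7,11,0]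
def e89 : Equiv.Perm (Fin 12) := mkP ![2,3,10,11,6,7,8,9,4,5,0,1] ![10,11,0,1,8,9,4,5,6,7,2,3]
def e90 : Equiv.Perm (Fin 12) := mkP ![11,0,4,8,9,7,5,6,10,2,3,1] ![1,11,9,10,2,6,7,5,3,4,8,0]
def e91 : Equiv.Perm (Fin 12) := mkP ![5,6,4,2,3,7,11,0,10,8,9,1] ![7,11,3,4,2,0,1,5,9,10,8,6]
def e92 : Equiv.Perm (Fin 12) := mkP ![5,0,10,2,9,1,11,6,4,8,3,7] ![1,5,3,10,8,0,7,11,9,4,2,6]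
def e93 : Equiv.Perm (Fin 12) := mkP ![0,7,8,3,10,11,6,1,2,9,4,5] ![0,7,8,3,10,11,6,1,2,9,4,5]
def e94 : Equiv.Perm (Fin 12) := mkP ![6,1,8,9,4,11,0,7,2,3,10,5] ![6,1,8,9,4,11,0,7,2,3,10,5]
def e95 : Equiv.Perm (Fin 12) := mkP ![6,7,2,9,10,5,0,1,8,3,4,11] ![6,7,2,9,10,5,0,1,8,3,4,11]

/-- The list of all 96 elements of `T`. -/
def L : List (Equiv.Perm (Fin 12)) := [e0, e1, e2, e3, e4, e5, e6, e7, e8, e9, e10, e11, e12, e13, e14, e15, e16, e17, e18, e19, e20, e21, e22, e23, e24, e25, e26, e27, e28, e29, e30, e31, e32, e33, e34, e35, e36, e37, e38, e39, e40, e41, e42, e43, e44, e45, e46, e47, e48, e49, e50, e51, e52, e53, e54, e55, e56, e57, e58, e59, e60, e61, e62, e63, e64, e65, e66, e67, e68, e69, e70, e71, e72, e73, e74, e75, e76, e77, e78, e79, e80, e81, e82, e83, e84, e85, e86, e87, e88, e89, e90, e91, e92, e93, e94, e95]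

/-- The subgroup generated by `a` and `b`. -/
def T : Subgroup (Equiv.Perm (Fin 12)) := Subgroup.closure {a, b}


lemma memo {α : Type*} {x y : α} {l : List α} (h : x = y) (hy : y ∈ l) : x ∈ l := h ▸ hy
lemma memT {x y : Equiv.Perm (Fin 12)} (h : x = y) (hx : x ∈ T) : y ∈ T := h ▸ hx

lemma haea : a = e1 := by decide
lemma hbeb : b = e2 := by decide
lemma h1e0 : (1 : Equiv.Perm (Fin 12)) = e0 := by decide
lemma ha : a ∈ T := Subgroup.subset_closure (by simp)
lemma hb : b ∈ T := Subgroup.subset_closure (by simp)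

lemma m0 : e0 ∈ L := by decide
lemma m1 : e1 ∈ L := by decide
lemma m2 : e2 ∈ L := by decide
lemma m3 : e3 ∈ L := by decide
lemma m4 : e4 ∈ L := by decide
lemma m5 : e5 ∈ L := by decide
lemma m6 : e6 ∈ L := by decide
lemma m7 : e7 ∈ L := by decide
lemma m8 : e8 ∈ L := by decide
lemma m9 : e9 ∈ L := by decide
lemma m10 : e10 ∈ L := by decide
lemma m11 : e11 ∈ L := by decide
lemma m12 : e12 ∈ L := by decide
lemma m13 : e13 ∈ L := by decide
lemma m14 : e14 ∈ L := by decide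
lemma m15 : e15 ∈ L := by decide
lemma m16 : e16 ∈ L := by decide
lemma m17 : e17 ∈ L := by decide
lemma m18 : e18 ∈ L := by decide
lemma m19 : e19 ∈ L := by decide
lemma m20 : e20 ∈ L := by decide
lemma m21 : e21 ∈ L := by decide
lemma m22 : e22 ∈ L := by decide
lemma m23 : e23 ∈ L := by decide
lemma m24 : e24 ∈ L := by decide
lemma m25 : e25 ∈ L := by decide
lemma m26 : e26 ∈ L := by decide
lemma m27 : e27 ∈ L := by decide
lemma m28 : e28 ∈ L := by decide
lemma m29 : e29 ∈ L := by decide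
lemma m30 : e30 ∈ L := by decide
lemma m31 : e31 ∈ L := by decide
lemma m32 : e32 ∈ L := by decide
lemma m33 : e33 ∈ L := by decide
lemma m34 : e34 ∈ L := by decide
lemma m35 : e35 ∈ L := by decide
lemma m36 : e36 ∈ L := by decide
lemma m37 : e37 ∈ L := by decide
lemma m38 : e38 ∈ L := by decide
lemma m39 : e39 ∈ L := by decide
lemma m40 : e40 ∈ L := by decide
lemma m41 : e41 ∈ L := by decide
lemma m42 : e42 ∈ L := by decide
lemma m43 : e43 ∈ L := by decide
lemma m44 : e44 ∈ L := by decide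
lemma m45 : e45 ∈ L := by decide
lemma m46 : e46 ∈ L := by decide
lemma m47 : e47 ∈ L := by decide
lemma m48 : e48 ∈ L := by decide
lemma m49 : e49 ∈ L := by decide
lemma m50 : e50 ∈ L := by decide
lemma m51 : e51 ∈ L := by decide
lemma m52 : e52 ∈ L := by decide
lemma m53 : e53 ∈ L := by decide
lemma m54 : e54 ∈ L := by decide
lemma m55 : e55 ∈ L := by decide
lemma m56 : e56 ∈ L := by decide
lemma m57 : e57 ∈ L := by decide
lemma m58 : e58 ∈ L := by decide
lemma m59 : e59 ∈ L := by decide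
lemma m60 : e60 ∈ L := by decide
lemma m61 : e61 ∈ L := by decide
lemma m62 : e62 ∈ L := by decide
lemma m63 : e63 ∈ L := by decide
lemma m64 : e64 ∈ L := by decide
lemma m65 : e65 ∈ L := by decide
lemma m66 : e66 ∈ L := by decide
lemma m67 : e67 ∈ L := by decide
lemma m68 : e68 ∈ L := by decide
lemma m69 : e69 ∈ L := by decide
lemma m70 : e70 ∈ L := by decide
lemma m71 : e71 ∈ L := by decide
lemma m72 : e72 ∈ L := by decide
lemma m73 : e73 ∈ L := by decide
lemma m74 : e74 ∈ L := by decide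
lemma m75 : e75 ∈ L := by decide
lemma m76 : e76 ∈ L := by decide
lemma m77 : e77 ∈ L := by decide
lemma m78 : e78 ∈ L := by decide
lemma m79 : e79 ∈ L := by decide
lemma m80 : e80 ∈ L := by decide
lemma m81 : e81 ∈ L := by decide
lemma m82 : e82 ∈ L := by decide
lemma m83 : e83 ∈ L := by decide
lemma m84 : e84 ∈ L := by decide
lemma m85 : e85 ∈ L := by decide
lemma m86 : e86 ∈ L := by decide
lemma m87 : e87 ∈ L := by decide
lemma m88 : e88 ∈ L := by decide
lemma m89 : e89 ∈ L := by decide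
lemma m90 : e90 ∈ L := by decide
lemma m91 : e91 ∈ L := by decide
lemma m92 : e92 ∈ L := by decide
lemma m93 : e93 ∈ L := by decide
lemma m94 : e94 ∈ L := by decide
lemma m95 : e95 ∈ L := by decide

lemma pa0 : e1 * e0 = e1 := by decide
lemma pb0 : e2 * e0 = e2 := by decide
lemma qa0 : e1⁻¹ * e0 = e3 := by decide
lemma qb0 : e2⁻¹ * e0 = e6 := by decide
lemma pa1 : e1 * e1 = e3 := by decide
lemma pb1 : e2 * e1 = e5 := by decide
lemma qa1 : e1⁻¹ * e1 = e0 := by decide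
lemma qb1 : e2⁻¹ * e1 = e12 := by decide
lemma pa2 : e1 * e2 = e4 := by decide
lemma pb2 : e2 * e2 = e6 := by decide
lemma qa2 : e1⁻¹ * e2 = e7 := by decide
lemma qb2 : e2⁻¹ * e2 = e0 := by decide
lemma pa3 : e1 * e3 = e0 := by decide
lemma pb3 : e2 * e3 = e10 := by decide
lemma qa3 : e1⁻¹ * e3 = e1 := by decide
lemma qb3 : e2⁻¹ * e3 = e21 := by decide
lemma pa4 : e1 * e4 = e7 := by decide
lemma pb4 : e2 * e4 = e11 := by decide
lemma qa4 : e1⁻¹ * e4 = e2 := by decide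
lemma qb4 : e2⁻¹ * e4 = e22 := by decide
lemma pa5 : e1 * e5 = e8 := by decide
lemma pb5 : e2 * e5 = e12 := by decide
lemma qa5 : e1⁻¹ * e5 = e13 := by decide
lemma qb5 : e2⁻¹ * e5 = e1 := by decide
lemma pa6 : e1 * e6 = e9 := by decide
lemma pb6 : e2 * e6 = e0 := by decide
lemma qa6 : e1⁻¹ * e6 = e14 := by decide
lemma qb6 : e2⁻¹ * e6 = e2 := by decide
lemma pa7 : e1 * e7 = e2 := by decide
lemma pb7 : e2 * e7 = e18 := by decide
lemma qa7 : e1⁻¹ * e7 = e4 := by decide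
lemma qb7 : e2⁻¹ * e7 = e36 := by decide
lemma pa8 : e1 * e8 = e13 := by decide
lemma pb8 : e2 * e8 = e19 := by decide
lemma qa8 : e1⁻¹ * e8 = e5 := by decide
lemma qb8 : e2⁻¹ * e8 = e37 := by decide
lemma pa9 : e1 * e9 = e14 := by decide
lemma pb9 : e2 * e9 = e20 := by decide
lemma qa9 : e1⁻¹ * e9 = e6 := by decide
lemma qb9 : e2⁻¹ * e9 = e38 := by decide
lemma pa10 : e1 * e10 = e15 := by decide
lemma pb10 : e2 * e10 = e21 := by decide
lemma qa10 : e1⁻¹ * e10 = e23 := by decide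
lemma qb10 : e2⁻¹ * e10 = e3 := by decide
lemma pa11 : e1 * e11 = e16 := by decide
lemma pb11 : e2 * e11 = e22 := by decide
lemma qa11 : e1⁻¹ * e11 = e24 := by decide
lemma qb11 : e2⁻¹ * e11 = e4 := by decide
lemma pa12 : e1 * e12 = e17 := by decide
lemma pb12 : e2 * e12 = e1 := by decide
lemma qa12 : e1⁻¹ * e12 = e25 := by decide
lemma qb12 : e2⁻¹ * e12 = e5 := by decide
lemma pa13 : e1 * e13 = e5 := by decide
lemma pb13 : e2 * e13 = e31 := by decide
lemma qa13 : e1⁻¹ * e13 = e8 := by decide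
lemma qb13 : e2⁻¹ * e13 = e57 := by decide
lemma pa14 : e1 * e14 = e6 := by decide
lemma pb14 : e2 * e14 = e32 := by decide
lemma qa14 : e1⁻¹ * e14 = e9 := by decide
lemma qb14 : e2⁻¹ * e14 = e58 := by decide
lemma pa15 : e1 * e15 = e23 := by decide
lemma pb15 : e2 * e15 = e33 := by decide
lemma qa15 : e1⁻¹ * e15 = e10 := by decide
lemma qb15 : e2⁻¹ * e15 = e59 := by decide
lemma pa16 : e1 * e16 = e24 := by decide
lemma pb16 : e2 * e16 = e34 := by decide
lemma qa16 : e1⁻¹ * e16 = e11 := by decide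
lemma qb16 : e2⁻¹ * e16 = e60 := by decide
lemma pa17 : e1 * e17 = e25 := by decide
lemma pb17 : e2 * e17 = e35 := by decide
lemma qa17 : e1⁻¹ * e17 = e12 := by decide
lemma qb17 : e2⁻¹ * e17 = e39 := by decide
lemma pa18 : e1 * e18 = e26 := by decide
lemma pb18 : e2 * e18 = e36 := by decide
lemma qa18 : e1⁻¹ * e18 = e39 := by decide
lemma qb18 : e2⁻¹ * e18 = e7 := by decide
lemma pa19 : e1 * e19 = e27 := by decide
lemma pb19 : e2 * e19 = e37 := by decide
lemma qa19 : e1⁻¹ * e19 = e40 := by decide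
lemma qb19 : e2⁻¹ * e19 = e8 := by decide
lemma pa20 : e1 * e20 = e28 := by decide
lemma pb20 : e2 * e20 = e38 := by decide
lemma qa20 : e1⁻¹ * e20 = e41 := by decide
lemma qb20 : e2⁻¹ * e20 = e9 := by decide
lemma pa21 : e1 * e21 = e29 := by decide
lemma pb21 : e2 * e21 = e3 := by decide
lemma qa21 : e1⁻¹ * e21 = e42 := by decide
lemma qb21 : e2⁻¹ * e21 = e10 := by decide
lemma pa22 : e1 * e22 = e30 := by decide
lemma pb22 : e2 * e22 = e4 := by decide
lemma qa22 : e1⁻¹ * e22 = e43 := by decide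
lemma qb22 : e2⁻¹ * e22 = e11 := by decide
lemma pa23 : e1 * e23 = e10 := by decide
lemma pb23 : e2 * e23 = e51 := by decide
lemma qa23 : e1⁻¹ * e23 = e15 := by decide
lemma qb23 : e2⁻¹ * e23 = e69 := by decide
lemma pa24 : e1 * e24 = e11 := by decide
lemma pb24 : e2 * e24 = e52 := by decide
lemma qa24 : e1⁻¹ * e24 = e16 := by decide
lemma qb24 : e2⁻¹ * e24 = e79 := by decide
lemma pa25 : e1 * e25 = e12 := by decide
lemma pb25 : e2 * e25 = e53 := by decide
lemma qa25 : e1⁻¹ * e25 = e17 := by decide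
lemma qb25 : e2⁻¹ * e25 = e77 := by decide
lemma pa26 : e1 * e26 = e39 := by decide
lemma pb26 : e2 * e26 = e54 := by decide
lemma qa26 : e1⁻¹ * e26 = e18 := by decide
lemma qb26 : e2⁻¹ * e26 = e76 := by decide
lemma pa27 : e1 * e27 = e40 := by decide
lemma pb27 : e2 * e27 = e47 := by decide
lemma qa27 : e1⁻¹ * e27 = e19 := by decide
lemma qb27 : e2⁻¹ * e27 = e72 := by decide
lemma pa28 : e1 * e28 = e41 := by decide
lemma pb28 : e2 * e28 = e55 := by decide
lemma qa28 : e1⁻¹ * e28 = e20 := by decide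
lemma qb28 : e2⁻¹ * e28 = e80 := by decide
lemma pa29 : e1 * e29 = e42 := by decide
lemma pb29 : e2 * e29 = e56 := by decide
lemma qa29 : e1⁻¹ * e29 = e21 := by decide
lemma qb29 : e2⁻¹ * e29 = e61 := by decide
lemma pa30 : e1 * e30 = e43 := by decide
lemma pb30 : e2 * e30 = e44 := by decide
lemma qa30 : e1⁻¹ * e30 = e22 := by decide
lemma qb30 : e2⁻¹ * e30 = e62 := by decide
lemma pa31 : e1 * e31 = e44 := by decide
lemma pb31 : e2 * e31 = e57 := by decide
lemma qa31 : e1⁻¹ * e31 = e61 := by decide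
lemma qb31 : e2⁻¹ * e31 = e13 := by decide
lemma pa32 : e1 * e32 = e45 := by decide
lemma pb32 : e2 * e32 = e58 := by decide
lemma qa32 : e1⁻¹ * e32 = e62 := by decide
lemma qb32 : e2⁻¹ * e32 = e14 := by decide
lemma pa33 : e1 * e33 = e46 := by decide
lemma pb33 : e2 * e33 = e59 := by decide
lemma qa33 : e1⁻¹ * e33 = e63 := by decide
lemma qb33 : e2⁻¹ * e33 = e15 := by decide
lemma pa34 : e1 * e34 = e47 := by decide
lemma pb34 : e2 * e34 = e60 := by decide
lemma qa34 : e1⁻¹ * e34 = e64 := by decide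
lemma qb34 : e2⁻¹ * e34 = e16 := by decide
lemma pa35 : e1 * e35 = e48 := by decide
lemma pb35 : e2 * e35 = e39 := by decide
lemma qa35 : e1⁻¹ * e35 = e65 := by decide
lemma qb35 : e2⁻¹ * e35 = e17 := by decide
lemma pa36 : e1 * e36 = e49 := by decide
lemma pb36 : e2 * e36 = e7 := by decide
lemma qa36 : e1⁻¹ * e36 = e66 := by decide
lemma qb36 : e2⁻¹ * e36 = e18 := by decide
lemma pa37 : e1 * e37 = e50 := by decide
lemma pb37 : e2 * e37 = e8 := by decide
lemma qa37 : e1⁻¹ * e37 = e67 := by decide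
lemma qb37 : e2⁻¹ * e37 = e19 := by decide
lemma pa38 : e1 * e38 = e51 := by decide
lemma pb38 : e2 * e38 = e9 := by decide
lemma qa38 : e1⁻¹ * e38 = e68 := by decide
lemma qb38 : e2⁻¹ * e38 = e20 := by decide
lemma pa39 : e1 * e39 = e18 := by decide
lemma pb39 : e2 * e39 = e17 := by decide
lemma qa39 : e1⁻¹ * e39 = e26 := by decide
lemma qb39 : e2⁻¹ * e39 = e35 := by decide
lemma pa40 : e1 * e40 = e19 := by decide
lemma pb40 : e2 * e40 = e66 := by decide
lemma qa40 : e1⁻¹ * e40 = e27 := by decide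
lemma qb40 : e2⁻¹ * e40 = e90 := by decide
lemma pa41 : e1 * e41 = e20 := by decide
lemma pb41 : e2 * e41 = e65 := by decide
lemma qa41 : e1⁻¹ * e41 = e28 := by decide
lemma qb41 : e2⁻¹ * e41 = e85 := by decide
lemma pa42 : e1 * e42 = e21 := by decide
lemma pb42 : e2 * e42 = e71 := by decide
lemma qa42 : e1⁻¹ * e42 = e29 := by decide
lemma qb42 : e2⁻¹ * e42 = e84 := by decide
lemma pa43 : e1 * e43 = e22 := by decide
lemma pb43 : e2 * e43 = e70 := by decide
lemma qa43 : e1⁻¹ * e43 = e30 := by decide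
lemma qb43 : e2⁻¹ * e43 = e92 := by decide
lemma pa44 : e1 * e44 = e61 := by decide
lemma pb44 : e2 * e44 = e62 := by decide
lemma qa44 : e1⁻¹ * e44 = e31 := by decide
lemma qb44 : e2⁻¹ * e44 = e30 := by decide
lemma pa45 : e1 * e45 = e62 := by decide
lemma pb45 : e2 * e45 = e78 := by decide
lemma qa45 : e1⁻¹ * e45 = e32 := by decide
lemma qb45 : e2⁻¹ * e45 = e88 := by decide
lemma pa46 : e1 * e46 = e63 := by decide
lemma pb46 : e2 * e46 = e64 := by decide
lemma qa46 : e1⁻¹ * e46 = e33 := by decide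
lemma qb46 : e2⁻¹ * e46 = e87 := by decide
lemma pa47 : e1 * e47 = e64 := by decide
lemma pb47 : e2 * e47 = e72 := by decide
lemma qa47 : e1⁻¹ * e47 = e34 := by decide
lemma qb47 : e2⁻¹ * e47 = e27 := by decide
lemma pa48 : e1 * e48 = e65 := by decide
lemma pb48 : e2 * e48 = e75 := by decide
lemma qa48 : e1⁻¹ * e48 = e35 := by decide
lemma qb48 : e2⁻¹ * e48 = e91 := by decide
lemma pa49 : e1 * e49 = e66 := by decide
lemma pb49 : e2 * e49 = e74 := by decide
lemma qa49 : e1⁻¹ * e49 = e36 := by decide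
lemma qb49 : e2⁻¹ * e49 = e81 := by decide
lemma pa50 : e1 * e50 = e67 := by decide
lemma pb50 : e2 * e50 = e68 := by decide
lemma qa50 : e1⁻¹ * e50 = e37 := by decide
lemma qb50 : e2⁻¹ * e50 = e82 := by decide
lemma pa51 : e1 * e51 = e68 := by decide
lemma pb51 : e2 * e51 = e69 := by decide
lemma qa51 : e1⁻¹ * e51 = e38 := by decide
lemma qb51 : e2⁻¹ * e51 = e23 := by decide
lemma pa52 : e1 * e52 = e69 := by decide
lemma pb52 : e2 * e52 = e79 := by decide
lemma qa52 : e1⁻¹ * e52 = e81 := by decide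
lemma qb52 : e2⁻¹ * e52 = e24 := by decide
lemma pa53 : e1 * e53 = e70 := by decide
lemma pb53 : e2 * e53 = e77 := by decide
lemma qa53 : e1⁻¹ * e53 = e82 := by decide
lemma qb53 : e2⁻¹ * e53 = e25 := by decide
lemma pa54 : e1 * e54 = e71 := by decide
lemma pb54 : e2 * e54 = e76 := by decide
lemma qa54 : e1⁻¹ * e54 = e83 := by decide
lemma qb54 : e2⁻¹ * e54 = e26 := by decide
lemma pa55 : e1 * e55 = e72 := by decide
lemma pb55 : e2 * e55 = e80 := by decide
lemma qa55 : e1⁻¹ * e55 = e84 := by decide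
lemma qb55 : e2⁻¹ * e55 = e28 := by decide
lemma pa56 : e1 * e56 = e73 := by decide
lemma pb56 : e2 * e56 = e61 := by decide
lemma qa56 : e1⁻¹ * e56 = e85 := by decide
lemma qb56 : e2⁻¹ * e56 = e29 := by decide
lemma pa57 : e1 * e57 = e74 := by decide
lemma pb57 : e2 * e57 = e13 := by decide
lemma qa57 : e1⁻¹ * e57 = e86 := by decide
lemma qb57 : e2⁻¹ * e57 = e31 := by decide
lemma pa58 : e1 * e58 = e75 := by decide
lemma pb58 : e2 * e58 = e14 := by decide
lemma qa58 : e1⁻¹ * e58 = e87 := by decide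
lemma qb58 : e2⁻¹ * e58 = e32 := by decide
lemma pa59 : e1 * e59 = e76 := by decide
lemma pb59 : e2 * e59 = e15 := by decide
lemma qa59 : e1⁻¹ * e59 = e88 := by decide
lemma qb59 : e2⁻¹ * e59 = e33 := by decide
lemma pa60 : e1 * e60 = e77 := by decide
lemma pb60 : e2 * e60 = e16 := by decide
lemma qa60 : e1⁻¹ * e60 = e89 := by decide
lemma qb60 : e2⁻¹ * e60 = e34 := by decide
lemma pa61 : e1 * e61 = e31 := by decide
lemma pb61 : e2 * e61 = e29 := by decide
lemma qa61 : e1⁻¹ * e61 = e44 := by decide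
lemma qb61 : e2⁻¹ * e61 = e56 := by decide
lemma pa62 : e1 * e62 = e32 := by decide
lemma pb62 : e2 * e62 = e30 := by decide
lemma qa62 : e1⁻¹ * e62 = e45 := by decide
lemma qb62 : e2⁻¹ * e62 = e44 := by decide
lemma pa63 : e1 * e63 = e33 := by decide
lemma pb63 : e2 * e63 = e86 := by decide
lemma qa63 : e1⁻¹ * e63 = e46 := by decide
lemma qb63 : e2⁻¹ * e63 = e95 := by decide
lemma pa64 : e1 * e64 = e34 := by decide
lemma pb64 : e2 * e64 = e87 := by decide
lemma qa64 : e1⁻¹ * e64 = e47 := by decide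
lemma qb64 : e2⁻¹ * e64 = e46 := by decide
lemma pa65 : e1 * e65 = e35 := by decide
lemma pb65 : e2 * e65 = e85 := by decide
lemma qa65 : e1⁻¹ * e65 = e48 := by decide
lemma qb65 : e2⁻¹ * e65 = e41 := by decide
lemma pa66 : e1 * e66 = e36 := by decide
lemma pb66 : e2 * e66 = e90 := by decide
lemma qa66 : e1⁻¹ * e66 = e49 := by decide
lemma qb66 : e2⁻¹ * e66 = e40 := by decide
lemma pa67 : e1 * e67 = e37 := by decide
lemma pb67 : e2 * e67 = e83 := by decide
lemma qa67 : e1⁻¹ * e67 = e50 := by decide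
lemma qb67 : e2⁻¹ * e67 = e94 := by decide
lemma pa68 : e1 * e68 = e38 := by decide
lemma pb68 : e2 * e68 = e82 := by decide
lemma qa68 : e1⁻¹ * e68 = e51 := by decide
lemma qb68 : e2⁻¹ * e68 = e50 := by decide
lemma pa69 : e1 * e69 = e81 := by decide
lemma pb69 : e2 * e69 = e23 := by decide
lemma qa69 : e1⁻¹ * e69 = e52 := by decide
lemma qb69 : e2⁻¹ * e69 = e51 := by decide
lemma pa70 : e1 * e70 = e82 := by decide
lemma pb70 : e2 * e70 = e92 := by decide
lemma qa70 : e1⁻¹ * e70 = e53 := by decide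
lemma qb70 : e2⁻¹ * e70 = e43 := by decide
lemma pa71 : e1 * e71 = e83 := by decide
lemma pb71 : e2 * e71 = e84 := by decide
lemma qa71 : e1⁻¹ * e71 = e54 := by decide
lemma qb71 : e2⁻¹ * e71 = e42 := by decide
lemma pa72 : e1 * e72 = e84 := by decide
lemma pb72 : e2 * e72 = e27 := by decide
lemma qa72 : e1⁻¹ * e72 = e55 := by decide
lemma qb72 : e2⁻¹ * e72 = e47 := by decide
lemma pa73 : e1 * e73 = e85 := by decide
lemma pb73 : e2 * e73 = e89 := by decide
lemma qa73 : e1⁻¹ * e73 = e56 := by decide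
lemma qb73 : e2⁻¹ * e73 = e93 := by decide
lemma pa74 : e1 * e74 = e86 := by decide
lemma pb74 : e2 * e74 = e81 := by decide
lemma qa74 : e1⁻¹ * e74 = e57 := by decide
lemma qb74 : e2⁻¹ * e74 = e49 := by decide
lemma pa75 : e1 * e75 = e87 := by decide
lemma pb75 : e2 * e75 = e91 := by decide
lemma qa75 : e1⁻¹ * e75 = e58 := by decide
lemma qb75 : e2⁻¹ * e75 = e48 := by decide
lemma pa76 : e1 * e76 = e88 := by decide
lemma pb76 : e2 * e76 = e26 := by decide
lemma qa76 : e1⁻¹ * e76 = e59 := by decide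
lemma qb76 : e2⁻¹ * e76 = e54 := by decide
lemma pa77 : e1 * e77 = e89 := by decide
lemma pb77 : e2 * e77 = e25 := by decide
lemma qa77 : e1⁻¹ * e77 = e60 := by decide
lemma qb77 : e2⁻¹ * e77 = e53 := by decide
lemma pa78 : e1 * e78 = e90 := by decide
lemma pb78 : e2 * e78 = e88 := by decide
lemma qa78 : e1⁻¹ * e78 = e93 := by decide
lemma qb78 : e2⁻¹ * e78 = e45 := by decide
lemma pa79 : e1 * e79 = e91 := by decide
lemma pb79 : e2 * e79 = e24 := by decide
lemma qa79 : e1⁻¹ * e79 = e94 := by decide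
lemma qb79 : e2⁻¹ * e79 = e52 := by decide
lemma pa80 : e1 * e80 = e92 := by decide
lemma pb80 : e2 * e80 = e28 := by decide
lemma qa80 : e1⁻¹ * e80 = e95 := by decide
lemma qb80 : e2⁻¹ * e80 = e55 := by decide
lemma pa81 : e1 * e81 = e52 := by decide
lemma pb81 : e2 * e81 = e49 := by decide
lemma qa81 : e1⁻¹ * e81 = e69 := by decide
lemma qb81 : e2⁻¹ * e81 = e74 := by decide
lemma pa82 : e1 * e82 = e53 := by decide
lemma pb82 : e2 * e82 = e50 := by decide
lemma qa82 : e1⁻¹ * e82 = e70 := by decide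
lemma qb82 : e2⁻¹ * e82 = e68 := by decide
lemma pa83 : e1 * e83 = e54 := by decide
lemma pb83 : e2 * e83 = e94 := by decide
lemma qa83 : e1⁻¹ * e83 = e71 := by decide
lemma qb83 : e2⁻¹ * e83 = e67 := by decide
lemma pa84 : e1 * e84 = e55 := by decide
lemma pb84 : e2 * e84 = e42 := by decide
lemma qa84 : e1⁻¹ * e84 = e72 := by decide
lemma qb84 : e2⁻¹ * e84 = e71 := by decide
lemma pa85 : e1 * e85 = e56 := by decide
lemma pb85 : e2 * e85 = e41 := by decide
lemma qa85 : e1⁻¹ * e85 = e73 := by decide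
lemma qb85 : e2⁻¹ * e85 = e65 := by decide
lemma pa86 : e1 * e86 = e57 := by decide
lemma pb86 : e2 * e86 = e95 := by decide
lemma qa86 : e1⁻¹ * e86 = e74 := by decide
lemma qb86 : e2⁻¹ * e86 = e63 := by decide
lemma pa87 : e1 * e87 = e58 := by decide
lemma pb87 : e2 * e87 = e46 := by decide
lemma qa87 : e1⁻¹ * e87 = e75 := by decide
lemma qb87 : e2⁻¹ * e87 = e64 := by decide
lemma pa88 : e1 * e88 = e59 := by decide
lemma pb88 : e2 * e88 = e45 := by decide
lemma qa88 : e1⁻¹ * e88 = e76 := by decide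
lemma qb88 : e2⁻¹ * e88 = e78 := by decide
lemma pa89 : e1 * e89 = e60 := by decide
lemma pb89 : e2 * e89 = e93 := by decide
lemma qa89 : e1⁻¹ * e89 = e77 := by decide
lemma qb89 : e2⁻¹ * e89 = e73 := by decide
lemma pa90 : e1 * e90 = e93 := by decide
lemma pb90 : e2 * e90 = e40 := by decide
lemma qa90 : e1⁻¹ * e90 = e78 := by decide
lemma qb90 : e2⁻¹ * e90 = e66 := by decide
lemma pa91 : e1 * e91 = e94 := by decide
lemma pb91 : e2 * e91 = e48 := by decide
lemma qa91 : e1⁻¹ * e91 = e79 := by decide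
lemma qb91 : e2⁻¹ * e91 = e75 := by decide
lemma pa92 : e1 * e92 = e95 := by decide
lemma pb92 : e2 * e92 = e43 := by decide
lemma qa92 : e1⁻¹ * e92 = e80 := by decide
lemma qb92 : e2⁻¹ * e92 = e70 := by decide
lemma pa93 : e1 * e93 = e78 := by decide
lemma pb93 : e2 * e93 = e73 := by decide
lemma qa93 : e1⁻¹ * e93 = e90 := by decide
lemma qb93 : e2⁻¹ * e93 = e89 := by decide
lemma pa94 : e1 * e94 = e79 := by decide
lemma pb94 : e2 * e94 = e67 := by decide
lemma qa94 : e1⁻¹ * e94 = e91 := by decide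
lemma qb94 : e2⁻¹ * e94 = e83 := by decide
lemma pa95 : e1 * e95 = e80 := by decide
lemma pb95 : e2 * e95 = e63 := by decide
lemma qa95 : e1⁻¹ * e95 = e92 := by decide
lemma qb95 : e2⁻¹ * e95 = e86 := by decide

lemma r1 : e0 * a = e1 := by decide
lemma r2 : e0 * b = e2 := by decide
lemma r3 : e1 * a = e3 := by decide
lemma r4 : e1 * b = e4 := by decide
lemma r5 : e2 * a = e5 := by decide
lemma r6 : e2 * b = e6 := by decide
lemma r7 : e3 * b = e7 := by decide
lemma r8 : e4 * a = e8 := by decide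
lemma r9 : e4 * b = e9 := by decide
lemma r10 : e5 * a = e10 := by decide
lemma r11 : e5 * b = e11 := by decide
lemma r12 : e6 * a = e12 := by decide
lemma r13 : e7 * a = e13 := by decide
lemma r14 : e7 * b = e14 := by decide
lemma r15 : e8 * a = e15 := by decide
lemma r16 : e8 * b = e16 := by decide
lemma r17 : e9 * a = e17 := by decide
lemma r18 : e10 * b = e18 := by decide
lemma r19 : e11 * a = e19 := by decide
lemma r20 : e11 * b = e20 := by decide
lemma r21 : e12 * a = e21 := by decide
lemma r22 : e12 * b = e22 := by decide
lemma r23 : e13 * a = e23 := by decide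
lemma r24 : e13 * b = e24 := by decide
lemma r25 : e14 * a = e25 := by decide
lemma r26 : e15 * b = e26 := by decide
lemma r27 : e16 * a = e27 := by decide
lemma r28 : e16 * b = e28 := by decide
lemma r29 : e17 * a = e29 := by decide
lemma r30 : e17 * b = e30 := by decide
lemma r31 : e18 * a = e31 := by decide
lemma r32 : e18 * b = e32 := by decide
lemma r33 : e19 * a = e33 := by decide
lemma r34 : e19 * b = e34 := by decide
lemma r35 : e20 * a = e35 := by decide
lemma r36 : e21 * b = e36 := by decide
lemma r37 : e22 * a = e37 := by decide
lemma r38 : e22 * b = e38 := by decide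
lemma r39 : e23 * b = e39 := by decide
lemma r40 : e24 * a = e40 := by decide
lemma r41 : e24 * b = e41 := by decide
lemma r42 : e25 * a = e42 := by decide
lemma r43 : e25 * b = e43 := by decide
lemma r44 : e26 * a = e44 := by decide
lemma r45 : e26 * b = e45 := by decide
lemma r46 : e27 * a = e46 := by decide
lemma r47 : e27 * b = e47 := by decide
lemma r48 : e28 * a = e48 := by decide
lemma r49 : e29 * b = e49 := by decide
lemma r50 : e30 * a = e50 := by decide
lemma r51 : e30 * b = e51 := by decide
lemma r52 : e31 * b = e52 := by decide
lemma r53 : e32 * a = e53 := by decide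
lemma r54 : e33 * b = e54 := by decide
lemma r55 : e34 * b = e55 := by decide
lemma r56 : e35 * a = e56 := by decide
lemma r57 : e36 * a = e57 := by decide
lemma r58 : e36 * b = e58 := by decide
lemma r59 : e37 * a = e59 := by decide
lemma r60 : e37 * b = e60 := by decide
lemma r61 : e39 * a = e61 := by decide
lemma r62 : e39 * b = e62 := by decide
lemma r63 : e40 * a = e63 := by decide
lemma r64 : e40 * b = e64 := by decide
lemma r65 : e41 * a = e65 := by decide
lemma r66 : e42 * b = e66 := by decide
lemma r67 : e43 * a = e67 := by decide
lemma r68 : e43 * b = e68 := by decide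
lemma r69 : e44 * b = e69 := by decide
lemma r70 : e45 * a = e70 := by decide
lemma r71 : e46 * b = e71 := by decide
lemma r72 : e47 * b = e72 := by decide
lemma r73 : e48 * a = e73 := by decide
lemma r74 : e49 * a = e74 := by decide
lemma r75 : e49 * b = e75 := by decide
lemma r76 : e50 * a = e76 := by decide
lemma r77 : e50 * b = e77 := by decide
lemma r78 : e54 * b = e78 := by decide
lemma r79 : e57 * b = e79 := by decide
lemma r80 : e60 * b = e80 := by decide
lemma r81 : e61 * b = e81 := by decide
lemma r82 : e62 * a = e82 := by decide
lemma r83 : e63 * b = e83 := by decide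
lemma r84 : e64 * b = e84 := by decide
lemma r85 : e65 * a = e85 := by decide
lemma r86 : e66 * a = e86 := by decide
lemma r87 : e66 * b = e87 := by decide
lemma r88 : e67 * a = e88 := by decide
lemma r89 : e67 * b = e89 := by decide
lemma r90 : e71 * b = e90 := by decide
lemma r91 : e74 * b = e91 := by decide
lemma r92 : e77 * b = e92 := by decide
lemma r93 : e83 * b = e93 := by decide
lemma r94 : e86 * b = e94 := by decide
lemma r95 : e89 * b = e95 := by decide

lemma s0 : e0 ∈ T := memT h1e0 (one_mem _)
lemma s1 : e1 ∈ T := memT r1 (mul_mem s0 ha)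
lemma s2 : e2 ∈ T := memT r2 (mul_mem s0 hb)
lemma s3 : e3 ∈ T := memT r3 (mul_mem s1 ha)
lemma s4 : e4 ∈ T := memT r4 (mul_mem s1 hb)
lemma s5 : e5 ∈ T := memT r5 (mul_mem s2 ha)
lemma s6 : e6 ∈ T := memT r6 (mul_mem s2 hb)
lemma s7 : e7 ∈ T := memT r7 (mul_mem s3 hb)
lemma s8 : e8 ∈ T := memT r8 (mul_mem s4 ha)
lemma s9 : e9 ∈ T := memT r9 (mul_mem s4 hb)
lemma s10 : e10 ∈ T := memT r10 (mul_mem s5 ha)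
lemma s11 : e11 ∈ T := memT r11 (mul_mem s5 hb)
lemma s12 : e12 ∈ T := memT r12 (mul_mem s6 ha)
lemma s13 : e13 ∈ T := memT r13 (mul_mem s7 ha)
lemma s14 : e14 ∈ T := memT r14 (mul_mem s7 hb)
lemma s15 : e15 ∈ T := memT r15 (mul_mem s8 ha)
lemma s16 : e16 ∈ T := memT r16 (mul_mem s8 hb)
lemma s17 : e17 ∈ T := memT r17 (mul_mem s9 ha)
lemma s18 : e18 ∈ T := memT r18 (mul_mem s10 hb)
lemma s19 : e19 ∈ T := memT r19 (mul_mem s11 ha)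
lemma s20 : e20 ∈ T := memT r20 (mul_mem s11 hb)
lemma s21 : e21 ∈ T := memT r21 (mul_mem s12 ha)
lemma s22 : e22 ∈ T := memT r22 (mul_mem s12 hb)
lemma s23 : e23 ∈ T := memT r23 (mul_mem s13 ha)
lemma s24 : e24 ∈ T := memT r24 (mul_mem s13 hb)
lemma s25 : e25 ∈ T := memT r25 (mul_mem s14 ha)
lemma s26 : e26 ∈ T := memT r26 (mul_mem s15 hb)
lemma s27 : e27 ∈ T := memT r27 (mul_mem s16 ha)
lemma s28 : e28 ∈ T := memT r28 (mul_mem s16 hb)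
lemma s29 : e29 ∈ T := memT r29 (mul_mem s17 ha)
lemma s30 : e30 ∈ T := memT r30 (mul_mem s17 hb)
lemma s31 : e31 ∈ T := memT r31 (mul_mem s18 ha)
lemma s32 : e32 ∈ T := memT r32 (mul_mem s18 hb)
lemma s33 : e33 ∈ T := memT r33 (mul_mem s19 ha)
lemma s34 : e34 ∈ T := memT r34 (mul_mem s19 hb)
lemma s35 : e35 ∈ T := memT r35 (mul_mem s20 ha)
lemma s36 : e36 ∈ T := memT r36 (mul_mem s21 hb)
lemma s37 : e37 ∈ T := memT r37 (mul_mem s22 ha)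
lemma s38 : e38 ∈ T := memT r38 (mul_mem s22 hb)
lemma s39 : e39 ∈ T := memT r39 (mul_mem s23 hb)
lemma s40 : e40 ∈ T := memT r40 (mul_mem s24 ha)
lemma s41 : e41 ∈ T := memT r41 (mul_mem s24 hb)
lemma s42 : e42 ∈ T := memT r42 (mul_mem s25 ha)
lemma s43 : e43 ∈ T := memT r43 (mul_mem s25 hb)
lemma s44 : e44 ∈ T := memT r44 (mul_mem s26 ha)
lemma s45 : e45 ∈ T := memT r45 (mul_mem s26 hb)
lemma s46 : e46 ∈ T := memT r46 (mul_mem s27 ha)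
lemma s47 : e47 ∈ T := memT r47 (mul_mem s27 hb)
lemma s48 : e48 ∈ T := memT r48 (mul_mem s28 ha)
lemma s49 : e49 ∈ T := memT r49 (mul_mem s29 hb)
lemma s50 : e50 ∈ T := memT r50 (mul_mem s30 ha)
lemma s51 : e51 ∈ T := memT r51 (mul_mem s30 hb)
lemma s52 : e52 ∈ T := memT r52 (mul_mem s31 hb)
lemma s53 : e53 ∈ T := memT r53 (mul_mem s32 ha)
lemma s54 : e54 ∈ T := memT r54 (mul_mem s33 hb)
lemma s55 : e55 ∈ T := memT r55 (mul_mem s34 hb)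
lemma s56 : e56 ∈ T := memT r56 (mul_mem s35 ha)
lemma s57 : e57 ∈ T := memT r57 (mul_mem s36 ha)
lemma s58 : e58 ∈ T := memT r58 (mul_mem s36 hb)
lemma s59 : e59 ∈ T := memT r59 (mul_mem s37 ha)
lemma s60 : e60 ∈ T := memT r60 (mul_mem s37 hb)
lemma s61 : e61 ∈ T := memT r61 (mul_mem s39 ha)
lemma s62 : e62 ∈ T := memT r62 (mul_mem s39 hb)
lemma s63 : e63 ∈ T := memT r63 (mul_mem s40 ha)
lemma s64 : e64 ∈ T := memT r64 (mul_mem s40 hb)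
lemma s65 : e65 ∈ T := memT r65 (mul_mem s41 ha)
lemma s66 : e66 ∈ T := memT r66 (mul_mem s42 hb)
lemma s67 : e67 ∈ T := memT r67 (mul_mem s43 ha)
lemma s68 : e68 ∈ T := memT r68 (mul_mem s43 hb)
lemma s69 : e69 ∈ T := memT r69 (mul_mem s44 hb)
lemma s70 : e70 ∈ T := memT r70 (mul_mem s45 ha)
lemma s71 : e71 ∈ T := memT r71 (mul_mem s46 hb)
lemma s72 : e72 ∈ T := memT r72 (mul_mem s47 hb)
lemma s73 : e73 ∈ T := memT r73 (mul_mem s48 ha)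
lemma s74 : e74 ∈ T := memT r74 (mul_mem s49 ha)
lemma s75 : e75 ∈ T := memT r75 (mul_mem s49 hb)
lemma s76 : e76 ∈ T := memT r76 (mul_mem s50 ha)
lemma s77 : e77 ∈ T := memT r77 (mul_mem s50 hb)
lemma s78 : e78 ∈ T := memT r78 (mul_mem s54 hb)
lemma s79 : e79 ∈ T := memT r79 (mul_mem s57 hb)
lemma s80 : e80 ∈ T := memT r80 (mul_mem s60 hb)
lemma s81 : e81 ∈ T := memT r81 (mul_mem s61 hb)
lemma s82 : e82 ∈ T := memT r82 (mul_mem s62 ha)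
lemma s83 : e83 ∈ T := memT r83 (mul_mem s63 hb)
lemma s84 : e84 ∈ T := memT r84 (mul_mem s64 hb)
lemma s85 : e85 ∈ T := memT r85 (mul_mem s65 ha)
lemma s86 : e86 ∈ T := memT r86 (mul_mem s66 ha)
lemma s87 : e87 ∈ T := memT r87 (mul_mem s66 hb)
lemma s88 : e88 ∈ T := memT r88 (mul_mem s67 ha)
lemma s89 : e89 ∈ T := memT r89 (mul_mem s67 hb)
lemma s90 : e90 ∈ T := memT r90 (mul_mem s71 hb)
lemma s91 : e91 ∈ T := memT r91 (mul_mem s74 hb)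
lemma s92 : e92 ∈ T := memT r92 (mul_mem s77 hb)
lemma s93 : e93 ∈ T := memT r93 (mul_mem s83 hb)
lemma s94 : e94 ∈ T := memT r94 (mul_mem s86 hb)
lemma s95 : e95 ∈ T := memT r95 (mul_mem s89 hb)

lemma hcard : L.toFinset.card = 96 := by decide

lemma hmemL : ∀ x ∈ L, e1 * x ∈ L ∧ e2 * x ∈ L ∧ e1⁻¹ * x ∈ L ∧ e2⁻¹ * x ∈ L := by
  intro x hx
  simp only [L, List.mem_cons, List.not_mem_nil, or_false] at hx
  rcases hx with rfl|rfl|rfl|rfl|rfl|rfl|rfl|rfl|rfl|rfl|rfl|rfl|rfl|rfl|rfl|rfl|rfl|rfl|rfl|rfl|rfl|rfl|rfl|rfl|rfl|rfl|rfl|rfl|rfl|rfl|rfl|rfl|rfl|rfl|rfl|rfl|rfl|rfl|rfl|rfl|rfl|rfl|rfl|rfl|rfl|rfl|rfl|rfl|rfl|rfl|rfl|rfl|rfl|rfl|rfl|rfl|rfl|rfl|rfl|rfl|rfl|rfl|rfl|rfl|rfl|rfl|rfl|rfl|rfl|rfl|rfl|rfl|rfl|rfl|rfl|rfl|rfl|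rfl|rfl|rfl|rfl|rfl|rfl|rfl|rfl|rfl|rfl|rfl|rfl|rfl|rfl|rfl|rfl|rfl|rfl|rfl
  exacts [⟨memo pa0 m1, memo pb0 m2, memo qa0 m3, memo qb0 m6⟩, ⟨memo pa1 m3, memo pb1 m5, memo qa1 m0, memo qb1 m12⟩, ⟨memo pa2 m4, memo pb2 m6, memo qa2 m7, memo qb2 m0⟩, ⟨memo pa3 m0, memo pb3 m10, memo qa3 m1, memo qb3 m21⟩, ⟨memo pa4 m7, memo pb4 m11, memo qa4 m2, memo qb4 m22⟩, ⟨memo pa5 m8, memo pb5 m12, memo qa5 m13, memo qb5 m1⟩, ⟨memo pa6 m9, memo pb6 m0, memo qa6 m14, memo qb6 m2⟩, ⟨memo pa7 m2, memo pb7 m18, memo qa7 m4, memo qb7 m36⟩, ⟨memo pa8 m13, memo pb8 m19, memo qa8 m5, memo qb8 m37⟩, ⟨memo pa9 m14, memo pb9 m20, memo qa9 m6, memo qb9 m38⟩, ⟨memo pa10 m15, memo pb10 m21, memo qa10 m23, memo qb10 m3⟩, ⟨memo pa11 m16, memo pb11 m22, memo qa11 m24, memo qb11 m4⟩, ⟨memo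 pa12 m17, memo pb12 m1, memo qa12 m25, memo qb12 m5⟩, ⟨memo pa13 m5, memo pb13 m31, memo qa13 m8, memo qb13 m57⟩, ⟨memo pa14 m6, memo pb14 m32, memo qa14 m9, memo qb14 m58⟩, ⟨memo pa15 m23, memo pb15 m33, memo qa15 m10, memo qb15 m59⟩, ⟨memo pa16 m24, memo pb16 m34, memo qa16 m11, memo qb16 m60⟩, ⟨memo pa17 m25, memo pb17 m35, memo qa17 m12, memo qb17 m39⟩, ⟨memo pa18 m26, memo pb18 m36, memo qa18 m39, memo qb18 m7⟩, ⟨memo pa19 m27, memo pb19 m37, memo qa19 m40, memo qb19 m8⟩, ⟨memo pa20 m28, memo pb20 m38, memo qa20 m41, memo qb20 m9⟩, ⟨memo pa21 m29, memo pb21 m3, memo qa21 m42, memo qb21 m10⟩, ⟨memo pa22 m30, memo pb22 m4, memo qa22 m43, memo qb22 m11⟩, ⟨memo pa23 m10, memo pb23 m51, memo qa23 m15, memo qb23 m69⟩, ⟨memo pa24 m11, memo pb24 m52, memo qa24 m16, memo qb24 m79⟩, ⟨memo pa25 m12, memo pb25 m53, memo qa25 m17, memo qb25 m77⟩, ⟨memo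 pa26 m39, memo pb26 m54, memo qa26 m18, memo qb26 m76⟩, ⟨memo pa27 m40, memo pb27 m47, memo qa27 m19, memo qb27 m72⟩, ⟨memo pa28 m41, memo pb28 m55, memo qa28 m20, memo qb28 m80⟩, ⟨memo pa29 m42, memo pb29 m56, memo qa29 m21, memo qb29 m61⟩, ⟨memo pa30 m43, memo pb30 m44, memo qa30 m22, memo qb30 m62⟩, ⟨memo pa31 m44, memo pb31 m57, memo qa31 m61, memo qb31 m13⟩, ⟨memo pa32 m45, memo pb32 m58, memo qa32 m62, memo qb32 m14⟩, ⟨memo pa33 m46, memo pb33 m59, memo qa33 m63, memo qb33 m15⟩, ⟨memo pa34 m47, memo pb34 m60, memo qa34 m64, memo qb34 m16⟩, ⟨memo pa35 m48, memo pb35 m39, memo qa35 m65, memo qb35 m17⟩, ⟨memo pa36 m49, memo pb36 m7, memo qa36 m66, memo qb36 m18⟩, ⟨memo pa37 m50, memo pb37 m8, memo qa37 m67, memo qb37 m19⟩, ⟨memo pa38 m51, memo pb38 m9, memo qa38 m68, memo qb38 m20⟩, ⟨memo pa39 m18, memo pb39 m17, memo qa39 m26, memo qb39 m35⟩, ⟨memo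 pa40 m19, memo pb40 m66, memo qa40 m27, memo qb40 m90⟩, ⟨memo pa41 m20, memo pb41 m65, memo qa41 m28, memo qb41 m85⟩, ⟨memo pa42 m21, memo pb42 m71, memo qa42 m29, memo qb42 m84⟩, ⟨memo pa43 m22, memo pb43 m70, memo qa43 m30, memo qb43 m92⟩, ⟨memo pa44 m61, memo pb44 m62, memo qa44 m31, memo qb44 m30⟩, ⟨memo pa45 m62, memo pb45 m78, memo qa45 m32, memo qb45 m88⟩, ⟨memo pa46 m63, memo pb46 m64, memo qa46 m33, memo qb46 m87⟩, ⟨memo pa47 m64, memo pb47 m72, memo qa47 m34, memo qb47 m27⟩, ⟨memo pa48 m65, memo pb48 m75, memo qa48 m35, memo qb48 m91⟩, ⟨memo pa49 m66, memo pb49 m74, memo qa49 m36, memo qb49 m81⟩, ⟨memo pa50 m67, memo pb50 m68, memo qa50 m37, memo qb50 m82⟩, ⟨memo pa51 m68, memo pb51 m69, memo qa51 m38, memo qb51 m23⟩, ⟨memo pa52 m69, memo pb52 m79, memo qa52 m81, memo qb52 m24⟩, ⟨memo pa53 m70, memo pb53 m77, memo qa53 m82, memo qb53 m25⟩, ⟨memo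 pa54 m71, memo pb54 m76, memo qa54 m83, memo qb54 m26⟩, ⟨memo pa55 m72, memo pb55 m80, memo qa55 m84, memo qb55 m28⟩, ⟨memo pa56 m73, memo pb56 m61, memo qa56 m85, memo qb56 m29⟩, ⟨memo pa57 m74, memo pb57 m13, memo qa57 m86, memo qb57 m31⟩, ⟨memo pa58 m75, memo pb58 m14, memo qa58 m87, memo qb58 m32⟩, ⟨memo pa59 m76, memo pb59 m15, memo qa59 m88, memo qb59 m33⟩, ⟨memo pa60 m77, memo pb60 m16, memo qa60 m89, memo qb60 m34⟩, ⟨memo pa61 m31, memo pb61 m29, memo qa61 m44, memo qb61 m56⟩, ⟨memo pa62 m32, memo pb62 m30, memo qa62 m45, memo qb62 m44⟩, ⟨memo pa63 m33, memo pb63 m86, memo qa63 m46, memo qb63 m95⟩, ⟨memo pa64 m34, memo pb64 m87, memo qa64 m47, memo qb64 m46⟩, ⟨memo pa65 m35, memo pb65 m85, memo qa65 m48, memo qb65 m41⟩, ⟨memo pa66 m36, memo pb66 m90, memo qa66 m49, memo qb66 m40⟩, ⟨memo pa67 m37, memo pb67 m83, memo qa67 m50, memo qb67 m94⟩, ⟨memo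 pa68 m38, memo pb68 m82, memo qa68 m51, memo qb68 m50⟩, ⟨memo pa69 m81, memo pb69 m23, memo qa69 m52, memo qb69 m51⟩, ⟨memo pa70 m82, memo pb70 m92, memo qa70 m53, memo qb70 m43⟩, ⟨memo pa71 m83, memo pb71 m84, memo qa71 m54, memo qb71 m42⟩, ⟨memo pa72 m84, memo pb72 m27, memo qa72 m55, memo qb72 m47⟩, ⟨memo pa73 m85, memo pb73 m89, memo qa73 m56, memo qb73 m93⟩, ⟨memo pa74 m86, memo pb74 m81, memo qa74 m57, memo qb74 m49⟩, ⟨memo pa75 m87, memo pb75 m91, memo qa75 m58, memo qb75 m48⟩, ⟨memo pa76 m88, memo pb76 m26, memo qa76 m59, memo qb76 m54⟩, ⟨memo pa77 m89, memo pb77 m25, memo qa77 m60, memo qb77 m53⟩, ⟨memo pa78 m90, memo pb78 m88, memo qa78 m93, memo qb78 m45⟩, ⟨memo pa79 m91, memo pb79 m24, memo qa79 m94, memo qb79 m52⟩, ⟨memo pa80 m92, memo pb80 m28, memo qa80 m95, memo qb80 m55⟩, ⟨memo pa81 m52, memo pb81 m49, memo qa81 m69, memo qb81 m74⟩, ⟨memo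 pa82 m53, memo pb82 m50, memo qa82 m70, memo qb82 m68⟩, ⟨memo pa83 m54, memo pb83 m94, memo qa83 m71, memo qb83 m67⟩, ⟨memo pa84 m55, memo pb84 m42, memo qa84 m72, memo qb84 m71⟩, ⟨memo pa85 m56, memo pb85 m41, memo qa85 m73, memo qb85 m65⟩, ⟨memo pa86 m57, memo pb86 m95, memo qa86 m74, memo qb86 m63⟩, ⟨memo pa87 m58, memo pb87 m46, memo qa87 m75, memo qb87 m64⟩, ⟨memo pa88 m59, memo pb88 m45, memo qa88 m76, memo qb88 m78⟩, ⟨memo pa89 m60, memo pb89 m93, memo qa89 m77, memo qb89 m73⟩, ⟨memo pa90 m93, memo pb90 m40, memo qa90 m78, memo qb90 m66⟩, ⟨memo pa91 m94, memo pb91 m48, memo qa91 m79, memo qb91 m75⟩, ⟨memo pa92 m95, memo pb92 m43, memo qa92 m80, memo qb92 m70⟩, ⟨memo pa93 m78, memo pb93 m73, memo qa93 m90, memo qb93 m89⟩, ⟨memo pa94 m79, memo pb94 m67, memo qa94 m91, memo qb94 m83⟩, ⟨memo pa95 m80, memo pb95 m63, memo qa95 m92, memo qb95 m86⟩]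

lemma hsup : ∀ x ∈ L, x ∈ T := by
  intro x hx
  simp only [L, List.mem_cons, List.not_mem_nil, or_false] at hx
  rcases hx with rfl|rfl|rfl|rfl|rfl|rfl|rfl|rfl|rfl|rfl|rfl|rfl|rfl|rfl|rfl|rfl|rfl|rfl|rfl|rfl|rfl|rfl|rfl|rfl|rfl|rfl|rfl|rfl|rfl|rfl|rfl|rfl|rfl|rfl|rfl|rfl|rfl|rfl|rfl|rfl|rfl|rfl|rfl|rfl|rfl|rfl|rfl|rfl|rfl|rfl|rfl|rfl|rfl|rfl|rfl|rfl|rfl|rfl|rfl|rfl|rfl|rfl|rfl|rfl|rfl|rfl|rfl|rfl|rfl|rfl|rfl|rfl|rfl|rfl|rfl|rfl|rfl|rfl|rfl|rfl|rfl|rfl|rfl|rfl|rfl|rfl|rfl|rfl|rfl|rfl|rfl|rfl|rfl|rfl|rfl|rfl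
  exacts [s0, s1, s2, s3, s4, s5, s6, s7, s8, s9, s10, s11, s12, s13, s14, s15, s16, s17, s18, s19, s20, s21, s22, s23, s24, s25, s26, s27, s28, s29, s30, s31, s32, s33, s34, s35, s36, s37, s38, s39, s40, s41, s42, s43, s44, s45, s46, s47, s48, s49, s50, s51, s52, s53, s54, s55, s56, s57, s58, s59, s60, s61, s62, s63, s64, s65, s66, s67, s68, s69, s70, s71, s72, s73, s74, s75, s76, s77, s78, s79, s80, s81, s82, s83, s84, s85, s86, s87, s88, s89, s90, s91, s92, s93, s94, s95]

lemma hsub : ∀ x ∈ T, x ∈ L := by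
  intro x hx
  induction hx using Subgroup.closure_induction_left with
  | one => exact memo h1e0 m0
  | mul_left g hg y hy ih =>
    rcases hg with rfl | rfl
    · rw [haea]; exact (hmemL y ih).1
    · rw [hbeb]; exact (hmemL y ih).2.1
  | inv_mul_cancel g hg y hy ih =>
    rcases hg with rfl | rfl
    · rw [haea]; exact (hmemL y ih).2.2.1
    · rw [hbeb]; exact (hmemL y ih).2.2.2

/-- `a` and `b` are even permutations, and the subgroup `T = ⟨a, b⟩` of the symmetric
group on 12 letters has order 96. -/
theorem stmt_0 :
    a ∈ alternatingGroup (Fin 12) ∧ b ∈ alternatingGroup (Fin 12) ∧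
    Nat.card (Subgroup.closure {a, b} : Subgroup (Equiv.Perm (Fin 12))) = 96 := by
  refine ⟨by rw [Equiv.Perm.mem_alternatingGroup]; decide,
    by rw [Equiv.Perm.mem_alternatingGroup]; decide, ?_⟩
  have hset : (Subgroup.closure {a, b} : Set (Equiv.Perm (Fin 12))) = ↑L.toFinset := by
    ext x
    simp only [Finset.mem_coe, List.mem_toFinset, SetLike.mem_coe]
    exact ⟨hsub x, hsup x⟩
  calc Nat.card (Subgroup.closure {a, b} : Subgroup (Equiv.Perm (Fin 12)))
      = Nat.card (Subgroup.closure {a, b} : Set (Equiv.Perm (Fin 12))) := rfl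
    _ = Nat.card (↑L.toFinset : Set (Equiv.Perm (Fin 12))) := by rw [hset]
    _ = L.toFinset.card := by rw [Nat.card_coe_set_eq, Set.ncard_coe_finset]
    _ = 96 := hcard
end

section
/- Let H = (Z/8Z)^× ⋉ Z/8Z be the semidirect product of the group of units of Z/8Z acting by multiplication on the additive group Z/8Z, with multiplication (u,n)(v,m) = (uv, n + u·m). Then the elements a = (3,2), b = (7,1), c = (7,2) each have order 2, the product abc = (3,7) has order 4, and a, b, c generate H. -/
/-- `H = (ZMod 8)ˣ ⋉ ZMod 8`: pairs `(u, n)` with `u` a unit mod 8 and `n : ZMod 8`,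
with multiplication `(u, n) * (v, m) = (u * v, n + u * m)`. -/
def H : Type := (ZMod 8)ˣ × ZMod 8

instance : Fintype H := inferInstanceAs (Fintype ((ZMod 8)ˣ × ZMod 8))
instance : DecidableEq H := inferInstanceAs (DecidableEq ((ZMod 8)ˣ × ZMod 8))

/-- The semidirect product multiplication `(u, n) * (v, m) = (u * v, n + u * m)`. -/
instance : Mul H := ⟨fun x y => (x.1 * y.1, x.2 + (x.1 : ZMod 8) * y.2)⟩
instance : One H := ⟨(1, 0)⟩
instance : Inv H := ⟨fun x => (x.1⁻¹, -(((x.1⁻¹ : (ZMod 8)ˣ) : ZMod 8) * x.2))⟩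

instance : Group H where
  mul_assoc x y z := Prod.ext (mul_assoc x.1 y.1 z.1) (by
    show (x.2 + (x.1 : ZMod 8) * y.2) + ((x.1 * y.1 : (ZMod 8)ˣ) : ZMod 8) * z.2
        = x.2 + (x.1 : ZMod 8) * (y.2 + (y.1 : ZMod 8) * z.2)
    push_cast
    ring)
  one_mul x := Prod.ext (one_mul x.1) (by
    show 0 + ((1 : (ZMod 8)ˣ) : ZMod 8) * x.2 = x.2
    simp)
  mul_one x := Prod.ext (mul_one x.1) (by
    show x.2 + (x.1 : ZMod 8) * 0 = x.2
    simp)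
  inv_mul_cancel x := Prod.ext (inv_mul_cancel x.1) (by
    show -(((x.1⁻¹ : (ZMod 8)ˣ) : ZMod 8) * x.2) + ((x.1⁻¹ : (ZMod 8)ˣ) : ZMod 8) * x.2 = 0
    simp)

/-- The unit `1` of `ZMod 8`. -/
def u1 : (ZMod 8)ˣ := 1
/-- The unit `3` of `ZMod 8`. -/
def u3 : (ZMod 8)ˣ := ⟨3, 3, by decide, by decide⟩
/-- The unit `5` of `ZMod 8`. -/
def u5 : (ZMod 8)ˣ := ⟨5, 5, by decide, by decide⟩
/-- The unit `7` of `ZMod 8`. -/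
def u7 : (ZMod 8)ˣ := ⟨7, 7, by decide, by decide⟩

/-- The element `(u, n)` of `H`. -/
def hmk (u : (ZMod 8)ˣ) (n : ZMod 8) : H := (u, n)

/-- In `H`, the elements `a = (3,2)`, `b = (7,1)`, `c = (7,2)` each have order 2,
`abc = (3,7)` has order 4, and `a, b, c` generate `H`. -/
theorem stmt_8 :
    orderOf (hmk u3 2) = 2 ∧ orderOf (hmk u7 1) = 2 ∧ orderOf (hmk u7 2) = 2 ∧
    hmk u3 2 * hmk u7 1 * hmk u7 2 = hmk u3 7 ∧
    orderOf (hmk u3 2 * hmk u7 1 * hmk u7 2) = 4 ∧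
    Subgroup.closure {hmk u3 2, hmk u7 1, hmk u7 2} = (⊤ : Subgroup H) := by

  have hP : Fact (Nat.Prime 2) := ⟨by norm_num⟩
  have ha : orderOf (hmk u3 2) = 2 := orderOf_eq_prime (by decide) (by decide)
  have hb : orderOf (hmk u7 1) = 2 := orderOf_eq_prime (by decide) (by decide)
  have hc : orderOf (hmk u7 2) = 2 := orderOf_eq_prime (by decide) (by decide)
  have hprod : hmk u3 2 * hmk u7 1 * hmk u7 2 = hmk u3 7 := by decide
  have h4 : orderOf (hmk u3 2 * hmk u7 1 * hmk u7 2) = 4 := by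
    rw [hprod, orderOf_eq_iff (by norm_num)]
    constructor
    · decide
    · intro m hm hm'
      interval_cases m <;> decide
  refine ⟨ha, hb, hc, hprod, h4, ?_⟩
  set K := Subgroup.closure {hmk u3 2, hmk u7 1, hmk u7 2} with hK
  have hsub : {hmk u3 2, hmk u7 1, hmk u7 2} ⊆ (K : Set H) := Subgroup.subset_closure
  have hA : hmk u3 2 ∈ K := hsub (by simp)
  have hB : hmk u7 1 ∈ K := hsub (by simp)
  have hC : hmk u7 2 ∈ K := hsub (by simp)
  have ht : hmk u1 1 ∈ K := by
    have : hmk u1 1 = (hmk u7 1 * hmk u7 2) ^ 7 := by decide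
    rw [this]; exact pow_mem (mul_mem hB hC) 7
  have htn : ∀ n : ZMod 8, hmk u1 n ∈ K := by
    have h : ∀ n : ZMod 8, hmk u1 n = (hmk u1 1) ^ n.val := by decide
    intro n; rw [h n]; exact pow_mem ht _
  have h3 : hmk u3 0 ∈ K := by
    have : hmk u3 0 = hmk u3 2 * hmk u1 2 := by decide
    rw [this]; exact mul_mem hA (htn 2)
  have h7 : hmk u7 0 ∈ K := by
    have : hmk u7 0 = hmk u7 1 * hmk u1 1 := by decide
    rw [this]; exact mul_mem hB ht
  have h5 : hmk u5 0 ∈ K := by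
    have : hmk u5 0 = hmk u3 0 * hmk u7 0 := by decide
    rw [this]; exact mul_mem h3 h7
  have h1 : hmk u1 0 ∈ K := htn 0
  have key : ∀ (u : (ZMod 8)ˣ) (n : ZMod 8),
      hmk u n = hmk u 0 * hmk u1 ((↑u⁻¹ : ZMod 8) * n) := by decide
  have hu : ∀ u : (ZMod 8)ˣ, u = u1 ∨ u = u3 ∨ u = u5 ∨ u = u7 := by decide
  rw [eq_top_iff]
  rintro ⟨u, n⟩ -
  have : hmk u n ∈ K := by
    rw [key u n]
    rcases hu u with h | h | h | h <;> subst h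
    · exact mul_mem h1 (htn _)
    · exact mul_mem h3 (htn _)
    · exact mul_mem h5 (htn _)
    · exact mul_mem h7 (htn _)
  exact this
end

section
/- Let H = (Z/8Z)^× ⋉ Z/8Z with multiplication (u,n)(v,m) = (uv, n + u·m), and let U_1 = {(1,0), (3,0), (5,0), (7,0)} and U_2 = {(1,0), (3,4), (5,4), (7,0)}. Then U_1 and U_2 are almost conjugate (Gassmann equivalent) in H: for every g in H, the number of elements of U_1 conjugate to g in H equals the number of elements of U_2 conjugate to g in H. -/
/-- `U₁ = {(1,0), (3,0), (5,0), (7,0)}`. -/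
def U1set : Set H := {hmk u1 0, hmk u3 0, hmk u5 0, hmk u7 0}

/-- `U₂ = {(1,0), (3,4), (5,4), (7,0)}`. -/
def U2set : Set H := {hmk u1 0, hmk u3 4, hmk u5 4, hmk u7 0}


instance decIsConj (g x : H) : Decidable (IsConj g x) :=
  decidable_of_iff (∃ c : H, c * g * c⁻¹ = x) isConj_iff.symm

/-- auxiliary decidable predicate for U₁ -/
def P1 (g x : H) : Prop :=
  (x = hmk u1 0 ∨ x = hmk u3 0 ∨ x = hmk u5 0 ∨ x = hmk u7 0) ∧ ∃ c : H, c * g * c⁻¹ = x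

/-- auxiliary decidable predicate for U₂ -/
def P2 (g x : H) : Prop :=
  (x = hmk u1 0 ∨ x = hmk u3 4 ∨ x = hmk u5 4 ∨ x = hmk u7 0) ∧ ∃ c : H, c * g * c⁻¹ = x

instance (g : H) : DecidablePred (P1 g) := fun _ => instDecidableAnd
instance (g : H) : DecidablePred (P2 g) := fun _ => instDecidableAnd

/-- `U₁` and `U₂` are almost conjugate (Gassmann equivalent) in `H`: for every `g ∈ H`
the conjugacy class of `g` meets `U₁` and `U₂` in the same number of elements. -/
theorem stmt_10 :
    ∀ g : H, {x | x ∈ U1set ∧ IsConj g x}.ncard = {x | x ∈ U2set ∧ IsConj g x}.ncard := by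
  have key : ∀ g : H,
      (Finset.univ.filter (P1 g)).card = (Finset.univ.filter (P2 g)).card := by decide
  intro g
  have e1 : {x | x ∈ U1set ∧ IsConj g x} = ↑(Finset.univ.filter (P1 g)) := by
    ext x
    simp [U1set, P1, isConj_iff, Set.mem_insert_iff, Set.mem_singleton_iff]
  have e2 : {x | x ∈ U2set ∧ IsConj g x} = ↑(Finset.univ.filter (P2 g)) := by
    ext x
    simp [U2set, P2, isConj_iff, Set.mem_insert_iff, Set.mem_singleton_iff]
  rw [e1, e2, Set.ncard_coe_finset, Set.ncard_coe_finset, key]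
end

section
/- Let H = (Z/8Z)^× ⋉ Z/8Z with multiplication (u,n)(v,m) = (uv, n + u·m), and let U_1 = {(1,0), (3,0), (5,0), (7,0)} and U_2 = {(1,0), (3,4), (5,4), (7,0)}. Then U_1 and U_2 are not conjugate in H: there is no h in H with hU_1h^{-1} = U_2. -/
/-- `U₁` and `U₂` are not conjugate in `H`: no `h ∈ H` satisfies `h U₁ h⁻¹ = U₂`. -/
theorem stmt_11 :
    ¬ ∃ h : H, {x | ∃ u ∈ U1set, h * u * h⁻¹ = x} = U2set := by
  rintro ⟨h, hh⟩
  rw [Set.ext_iff] at hh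
  have h3 := (hh (h * hmk u3 0 * h⁻¹)).mp ⟨hmk u3 0, by simp [U1set], rfl⟩
  have h5 := (hh (h * hmk u5 0 * h⁻¹)).mp ⟨hmk u5 0, by simp [U1set], rfl⟩
  clear hh
  simp only [U2set, Set.mem_insert_iff, Set.mem_singleton_iff] at h3 h5
  revert h3 h5
  revert h
  decide
end
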